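/- Let w, v ∈ ℝ^d with all blocks vʲ nonzero under a fixed partition, and let D be the block diagonal matrix with j-th block (1/(2‖vʲ‖₂))·I. Then Σⱼ‖wʲ‖₂ - wᵀDw ≤ Σⱼ‖vʲ‖₂ - vᵀDv. -/

import Mathlib

/-!
With `D` block diagonal, `wᵀDw = Σⱼ ‖wʲ‖² / (2‖vʲ‖)`, so both sides split into sums over blocks.
Blockwise the claim is `a - a² / (2b) ≤ b / 2` for `a = ‖wʲ‖`, `b = ‖vʲ‖ > 0`, and the gap is
`(a - b)² / (2b) ≥ 0`.
-/

open Matrix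

/-- Euclidean norm of the `j`-th block of the vector `w`, where the blocks are the fibers
of the assignment map `g`. -/
noncomputable def vblockNorm {d m : ℕ} (g : Fin d → Fin m) (w : Fin d → ℝ) (j : Fin m) : ℝ :=
  Real.sqrt (∑ k ∈ Finset.univ.filter (fun k => g k = j), (w k) ^ 2)

lemma sub_sq_div_two_mul_le {K : Type*} [Field K] [LinearOrder K] [IsStrictOrderedRing K]
    (a : K) {b : K} (hb : 0 < b) :
    a - a ^ 2 / (2 * b) ≤ b - b ^ 2 / (2 * b) := by
  have gap : b - b ^ 2 / (2 * b) - (a - a ^ 2 / (2 * b)) = (a - b) ^ 2 / (2 * b) := by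
    field_simp
    ring
  have : 0 ≤ (a - b) ^ 2 / (2 * b) := by positivity
  linarith

lemma vblockNorm_sq {d m : ℕ} (g : Fin d → Fin m) (w : Fin d → ℝ) (j : Fin m) :
    vblockNorm g w j ^ 2 = ∑ k ∈ Finset.univ.filter (fun k => g k = j), w k ^ 2 :=
  Real.sq_sqrt (Finset.sum_nonneg fun _ _ => sq_nonneg _)

lemma dotProduct_diagonal_comp_mulVec_self {d m : ℕ} (g : Fin d → Fin m) (c : Fin m → ℝ)
    (w : Fin d → ℝ) :
    w ⬝ᵥ diagonal (fun k => c (g k)) *ᵥ w = ∑ j, c j * vblockNorm g w j ^ 2 := by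
  calc w ⬝ᵥ diagonal (fun k => c (g k)) *ᵥ w
      = ∑ k, c (g k) * w k ^ 2 := by
        simp only [dotProduct, mulVec_diagonal]
        exact Finset.sum_congr rfl fun _ _ => by ring
    _ = ∑ j, ∑ k ∈ Finset.univ.filter (fun k => g k = j), c (g k) * w k ^ 2 :=
        (Finset.sum_fiberwise Finset.univ g _).symm
    _ = ∑ j, c j * vblockNorm g w j ^ 2 := by
        refine Finset.sum_congr rfl fun j _ => ?_
        rw [vblockNorm_sq, Finset.mul_sum]
        exact Finset.sum_congr rfl fun k hk => by rw [(Finset.mem_filter.mp hk).2]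

/-- Let `w, v ∈ ℝ^d` with all blocks `vʲ` nonzero under a fixed partition (the fibers of
`g`), and let `D` be the block-diagonal matrix with `j`-th block `(1/(2‖vʲ‖₂))·I`. Then
`Σⱼ‖wʲ‖₂ - wᵀDw ≤ Σⱼ‖vʲ‖₂ - vᵀDv`. -/
theorem stmt_9 (d m : ℕ) (g : Fin d → Fin m) (w v : Fin d → ℝ)
    (hv : ∀ j : Fin m, vblockNorm g v j ≠ 0)
    (D : Matrix (Fin d) (Fin d) ℝ)
    (hD : D = Matrix.diagonal (fun k => 1 / (2 * vblockNorm g v (g k)))) :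
    (∑ j : Fin m, vblockNorm g w j) - w ⬝ᵥ D *ᵥ w ≤
      (∑ j : Fin m, vblockNorm g v j) - v ⬝ᵥ D *ᵥ v := by
  subst hD
  rw [dotProduct_diagonal_comp_mulVec_self g (fun j => 1 / (2 * vblockNorm g v j)),
    dotProduct_diagonal_comp_mulVec_self g (fun j => 1 / (2 * vblockNorm g v j)),
    ← Finset.sum_sub_distrib, ← Finset.sum_sub_distrib]
  refine Finset.sum_le_sum fun j _ => ?_
  have hpos : 0 < vblockNorm g v j := (Real.sqrt_nonneg _).lt_of_ne' (hv j)
  simpa only [one_div_mul_eq_div] using sub_sq_div_two_mul_le (vblockNorm g w j) hpos
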